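/- Let g, w ∈ K⟦t⟧ and set y = Y(g). Then z = h(y)·∫w is the unique power series z ∈ K⟦t⟧ with constant term 0 satisfying the linear (variational) differential equation z' = w·h(y) + g·h'(y)·z. -/

import Mathlib

/-!
The chain rule gives `h(y)' = h'(y) · y' = g · h'(y) · h(y)`, so by the Leibniz rule
`h(y) · ∫w` solves the variational equation. That equation is linear, so the difference `d` of
two solutions with constant term `0` satisfies `d' = A · d`, `d(0) = 0`; comparing coefficients,
the `n`-th coefficient of `d'` is `(n + 1) · dₙ₊₁` while that of `A · d` only involves
`d₀, …, dₙ`, whence `d = 0` by strong induction.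
-/

open PowerSeries

/-- Composition `h(u)` of formal power series, intended for `u` with zero constant term. -/
noncomputable def pcomp {R : Type*} [CommSemiring R] (h u : R⟦X⟧) : R⟦X⟧ :=
  PowerSeries.mk fun n => ∑ i ∈ Finset.range (n + 1), coeff i h * coeff n (u ^ i)

/-- Formal integral: the unique `F` with `F' = f` and `F(0) = 0`. -/
noncomputable def pint {K : Type*} [Field K] (f : K⟦X⟧) : K⟦X⟧ :=
  PowerSeries.mk fun n => if n = 0 then 0 else coeff (n - 1) f / (n : K)

namespace PowerSeries

section CommRing

variable {R : Type*} [CommRing R]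

theorem coeff_pow_of_lt {u : R⟦X⟧} (hu : constantCoeff u = 0) {n i : ℕ} (hni : n < i) :
    coeff n (u ^ i) = 0 :=
  coeff_of_lt_order n <|
    (Nat.cast_lt.mpr hni).trans_le (le_order_pow_of_constantCoeff_eq_zero i hu)

theorem pcomp_eq_subst (h : R⟦X⟧) {u : R⟦X⟧} (hu : constantCoeff u = 0) :
    pcomp h u = h.subst u := by
  ext n
  rw [pcomp, coeff_mk, coeff_subst' (HasSubst.of_constantCoeff_zero' hu),
    finsum_eq_sum_of_support_subset _ (s := Finset.range (n + 1))]
  · rfl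
  · intro i hi
    by_contra hin
    simp only [Finset.coe_range, Set.mem_Iio, not_lt] at hin
    exact hi (by simp only [coeff_pow_of_lt hu (Nat.lt_of_succ_le hin), smul_zero])

theorem derivative_pcomp (h : R⟦X⟧) {u : R⟦X⟧} (hu : constantCoeff u = 0) :
    d⁄dX R (pcomp h u) = pcomp (d⁄dX R h) u * d⁄dX R u := by
  rw [pcomp_eq_subst _ hu, pcomp_eq_subst _ hu,
    derivative_subst (HasSubst.of_constantCoeff_zero' hu)]

theorem eq_zero_of_derivative_eq_mul [IsAddTorsionFree R] {A f : R⟦X⟧}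
    (hf0 : constantCoeff f = 0) (hf : d⁄dX R f = A * f) : f = 0 := by
  ext n
  induction n using Nat.strong_induction_on with
  | _ n ih =>
    rcases n with _ | m
    · simpa using hf0
    · have hAf : coeff m (A * f) = 0 := by
        rw [coeff_mul]
        refine Finset.sum_eq_zero fun pq hpq => ?_
        rw [ih pq.2 (Finset.Nat.antidiagonal.snd_lt hpq), map_zero, mul_zero]
      rw [← hf, coeff_derivative, mul_comm, ← Nat.cast_succ, ← nsmul_eq_mul] at hAf
      rw [map_zero]
      exact IsAddTorsionFree.nsmul_right_injective m.succ_ne_zero (hAf.trans (smul_zero _).symm)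

theorem eq_of_derivative_eq_add_mul [IsAddTorsionFree R] {A B f g : R⟦X⟧}
    (hc : constantCoeff f = constantCoeff g)
    (hf : d⁄dX R f = B + A * f) (hg : d⁄dX R g = B + A * g) : f = g := by
  refine sub_eq_zero.mp (eq_zero_of_derivative_eq_mul (A := A) ?_ ?_)
  · rw [map_sub, hc, sub_self]
  · rw [map_sub, hf, hg]
    ring

end CommRing

section Field

variable {K : Type*} [Field K]

theorem constantCoeff_pint (f : K⟦X⟧) : constantCoeff (pint f) = 0 := by
  rw [← coeff_zero_eq_constantCoeff_apply, pint, coeff_mk, if_pos rfl]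

theorem derivative_pint [CharZero K] (f : K⟦X⟧) : d⁄dX K (pint f) = f := by
  ext n
  rw [coeff_derivative, pint, coeff_mk, if_neg n.succ_ne_zero, Nat.add_sub_cancel, Nat.cast_succ,
    div_mul_cancel₀ _ (Nat.cast_add_one_ne_zero n)]

end Field

end PowerSeries

theorem stmt5_general {K : Type*} [Field K] [CharZero K] (g h w y : K⟦X⟧)
    (hy0 : constantCoeff y = 0) (hy : derivativeFun y = g * pcomp h y) :
    ∀ z : K⟦X⟧,
      (constantCoeff z = 0 ∧
        derivativeFun z = w * pcomp h y + g * pcomp (derivativeFun h) y * z) ↔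
      z = pcomp h y * pint w := by
  intro z
  show (_ ∧ d⁄dX K z = w * pcomp h y + g * pcomp (d⁄dX K h) y * z) ↔ _
  set H := pcomp h y
  have hH : d⁄dX K H = pcomp (d⁄dX K h) y * (g * H) := by
    rw [derivative_pcomp h hy0]
    exact congrArg _ hy
  have hsol : d⁄dX K (H * pint w) = w * H + g * pcomp (d⁄dX K h) y * (H * pint w) := by
    rw [Derivation.leibniz, hH, derivative_pint, smul_eq_mul, smul_eq_mul]
    ring
  have hsol0 : constantCoeff (H * pint w) = 0 := by
    rw [map_mul, constantCoeff_pint, mul_zero]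
  constructor
  · rintro ⟨hz0, hz⟩
    exact eq_of_derivative_eq_add_mul (hz0.trans hsol0.symm) hz hsol
  · rintro rfl
    exact ⟨hsol0, hsol⟩

/-- `z = h(y)·∫w` is the unique power series with constant term `0` satisfying
the variational equation `z' = w·h(y) + g·h'(y)·z`, where `y = Y(g)`. -/
theorem stmt5 {K : Type*} [Field K] [CharZero K] (g h w y : K⟦X⟧)
    (hh : constantCoeff h = 1)
    (hy0 : constantCoeff y = 0) (hy : derivativeFun y = g * pcomp h y) :
    ∀ z : K⟦X⟧,
      (constantCoeff z = 0 ∧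
        derivativeFun z = w * pcomp h y + g * pcomp (derivativeFun h) y * z) ↔
      z = pcomp h y * pint w :=
  stmt5_general g h w y hy0 hy
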